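/- arXiv:2112.01510 — 6 statements merged into one kernel-verified Lean document; each statement's English description precedes it below -/
import Mathlib

section
/- Let α > 0, δ ∈ ℝ and λ ∈ ℝ. There exist differentiable functions φ₀, φ₁ : ℝ → ℝ, not both identically zero on [0, α], satisfying φ₁′(θ) = −λ·φ₀(θ) and φ₀′(θ) = λ·φ₁(θ) for all θ ∈ [0, α], with the boundary conditions φ₁(0) = 0 and −φ₀(α)·sin(δ/2) + φ₁(α)·cos(δ/2) = 0, if and only if sin(λα + δ/2) = 0, that is, if and only if λ = −δ/(2α) + kπ/α for some integer k. -/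
open Real Set

private lemma constOn (f : ℝ → ℝ) (α : ℝ) (hf : Differentiable ℝ f)
    (h : ∀ θ ∈ Icc (0:ℝ) α, deriv f θ = 0) :
    ∀ θ ∈ Icc (0:ℝ) α, f θ = f 0 := by
  intro θ hθ
  refine constant_of_has_deriv_right_zero (hf.continuous.continuousOn) ?_ θ hθ
  intro x hx
  have h1 : HasDerivAt f 0 x := by
    have := (hf x).hasDerivAt
    rwa [h x ⟨hx.1, hx.2.le⟩] at this
  exact h1.hasDerivWithinAt

theorem stmt_2 (α : ℝ) (hα : 0 < α) (δ lam : ℝ) :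
    ((∃ φ₀ φ₁ : ℝ → ℝ,
        Differentiable ℝ φ₀ ∧ Differentiable ℝ φ₁ ∧
        ¬ (∀ θ ∈ Icc (0:ℝ) α, φ₀ θ = 0 ∧ φ₁ θ = 0) ∧
        (∀ θ ∈ Icc (0:ℝ) α, deriv φ₁ θ = -lam * φ₀ θ) ∧
        (∀ θ ∈ Icc (0:ℝ) α, deriv φ₀ θ = lam * φ₁ θ) ∧
        φ₁ 0 = 0 ∧ -φ₀ α * Real.sin (δ / 2) + φ₁ α * Real.cos (δ / 2) = 0)
      ↔ Real.sin (lam * α + δ / 2) = 0)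
    ∧ (Real.sin (lam * α + δ / 2) = 0 ↔ ∃ k : ℤ, lam = -δ / (2 * α) + k * π / α) := by
  have hc : ∀ x : ℝ, HasDerivAt (fun θ : ℝ => Real.cos (lam * θ))
      (-Real.sin (lam * x) * lam) x := fun x => by
    simpa using ((hasDerivAt_id' x).const_mul lam).cos
  have hs : ∀ x : ℝ, HasDerivAt (fun θ : ℝ => Real.sin (lam * θ))
      (Real.cos (lam * x) * lam) x := fun x => by
    simpa using ((hasDerivAt_id' x).const_mul lam).sin
  constructor
  · constructor
    · rintro ⟨φ₀, φ₁, h₀, h₁, hnt, hd₁, hd₀, hb0, hbα⟩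
      set u : ℝ → ℝ := fun θ => φ₀ θ * Real.cos (lam * θ) - φ₁ θ * Real.sin (lam * θ) with hu_def
      set v : ℝ → ℝ := fun θ => φ₀ θ * Real.sin (lam * θ) + φ₁ θ * Real.cos (lam * θ) with hv_def
      have hdu : ∀ θ ∈ Icc (0:ℝ) α, deriv u θ = 0 := by
        intro θ hθ
        have H0 : HasDerivAt φ₀ (lam * φ₁ θ) θ := by
          have := (h₀ θ).hasDerivAt; rwa [hd₀ θ hθ] at this
        have H1 : HasDerivAt φ₁ (-lam * φ₀ θ) θ := by
          have := (h₁ θ).hasDerivAt; rwa [hd₁ θ hθ] at this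
        have H := (H0.mul (hc θ)).sub (H1.mul (hs θ))
        rw [show deriv u θ = _ from H.deriv]; ring
      have hdv : ∀ θ ∈ Icc (0:ℝ) α, deriv v θ = 0 := by
        intro θ hθ
        have H0 : HasDerivAt φ₀ (lam * φ₁ θ) θ := by
          have := (h₀ θ).hasDerivAt; rwa [hd₀ θ hθ] at this
        have H1 : HasDerivAt φ₁ (-lam * φ₀ θ) θ := by
          have := (h₁ θ).hasDerivAt; rwa [hd₁ θ hθ] at this
        have H := (H0.mul (hs θ)).add (H1.mul (hc θ))
        rw [show deriv v θ = _ from H.deriv]; ring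
      have hud : Differentiable ℝ u :=
        (h₀.mul fun x => (hc x).differentiableAt).sub
          (h₁.mul fun x => (hs x).differentiableAt)
      have hvd : Differentiable ℝ v :=
        (h₀.mul fun x => (hs x).differentiableAt).add
          (h₁.mul fun x => (hc x).differentiableAt)
      have hu0 : u 0 = φ₀ 0 := by simp [hu_def, hb0]
      have hv0 : v 0 = 0 := by simp [hv_def, hb0]
      have huc := constOn u α hud hdu
      have hvc := constOn v α hvd hdv
      set A := φ₀ 0 with hA
      -- explicit form on Icc
      have hform : ∀ θ ∈ Icc (0:ℝ) α,
          φ₀ θ = A * Real.cos (lam * θ) ∧ φ₁ θ = -A * Real.sin (lam * θ) := by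
        intro θ hθ
        have h1 : φ₀ θ * Real.cos (lam * θ) - φ₁ θ * Real.sin (lam * θ) = A := by
          have := huc θ hθ; rw [hu0] at this; exact this
        have h2 : φ₀ θ * Real.sin (lam * θ) + φ₁ θ * Real.cos (lam * θ) = 0 := by
          have := hvc θ hθ; rw [hv0] at this; exact this
        have hpy := Real.sin_sq_add_cos_sq (lam * θ)
        constructor
        · linear_combination Real.cos (lam * θ) * h1 + Real.sin (lam * θ) * h2 - φ₀ θ * hpy
        · linear_combination (-Real.sin (lam * θ)) * h1 + Real.cos (lam * θ) * h2 - φ₁ θ * hpy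
      have hAne : A ≠ 0 := by
        intro hA0
        apply hnt
        intro θ hθ
        obtain ⟨e0, e1⟩ := hform θ hθ
        rw [e0, e1, hA0]; constructor <;> ring
      obtain ⟨e0, e1⟩ := hform α ⟨le_refl 0 |>.trans hα.le, le_refl α⟩
      rw [e0, e1] at hbα
      have : -A * (Real.sin (lam * α) * Real.cos (δ / 2) + Real.cos (lam * α) * Real.sin (δ / 2)) = 0 := by
        linarith [hbα]
      rw [Real.sin_add]
      rcases mul_eq_zero.mp this with h | h
      · exact absurd (by linarith : A = 0) hAne
      · exact h
    · intro hsin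
      refine ⟨fun θ => Real.cos (lam * θ), fun θ => -Real.sin (lam * θ), 
        fun x => (hc x).differentiableAt, fun x => ((hs x).neg).differentiableAt, ?_, ?_, ?_, ?_, ?_⟩
      · intro h
        have := (h 0 ⟨le_refl 0, hα.le⟩).1
        simp at this
      · intro θ hθ
        have := ((hs θ).neg).deriv
        rw [show deriv (fun θ => -Real.sin (lam * θ)) θ = _ from this]; ring
      · intro θ hθ
        rw [(hc θ).deriv]; ring
      · simp
      · have := Real.sin_add (lam * α) (δ / 2)
        rw [this] at hsin
        ring_nf
        ring_nf at hsin
        linarith [hsin]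
  · rw [Real.sin_eq_zero_iff]
    have hαne : α ≠ 0 := hα.ne'
    constructor
    · rintro ⟨n, hn⟩
      refine ⟨n, ?_⟩
      have h1 : lam = ((n:ℝ) * π - δ / 2) / α := by
        field_simp
        linarith
      rw [h1]
      field_simp
      ring
    · rintro ⟨k, hk⟩
      refine ⟨k, ?_⟩
      rw [hk]
      field_simp
      ring
end

section
/- For every real number λ ≥ 1/2 and every measurable function ξ : ℝ → ℝ, one has ∫₀¹ ( ∫₀ʳ (t/r)^λ · |ξ(t)| dt )² dr ≤ ∫₀¹ ξ(t)² dt, where all integrals are Lebesgue integrals and the inequality is read in [0, ∞]. -/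
open MeasureTheory Set

theorem stmt_6 (lam : ℝ) (hlam : (1 : ℝ) / 2 ≤ lam) (ξ : ℝ → ℝ) (hξ : Measurable ξ) :
    (∫⁻ r in Ioc (0:ℝ) 1,
        (∫⁻ t in Ioc (0:ℝ) r, ENNReal.ofReal ((t / r) ^ lam * |ξ t|)) ^ 2)
      ≤ ∫⁻ t in Ioc (0:ℝ) 1, ENNReal.ofReal (ξ t ^ 2) := by
  set C := ∫⁻ t in Ioc (0:ℝ) 1, ENNReal.ofReal (ξ t ^ 2) with hC
  have key : ∀ r ∈ Ioc (0:ℝ) 1,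
      (∫⁻ t in Ioc (0:ℝ) r, ENNReal.ofReal ((t / r) ^ lam * |ξ t|)) ^ 2 ≤ C := by
    intro r hr
    obtain ⟨hr0, hr1⟩ := hr
    have hlam' : (2:ℝ)⁻¹ ≤ lam := by linarith
    set f : ℝ → ENNReal := fun t => ENNReal.ofReal ((t / r) ^ (lam / 2) * t ^ (-(4:ℝ)⁻¹))
      with hf
    set g : ℝ → ENNReal := fun t =>
      ENNReal.ofReal ((t / r) ^ (lam / 2) * t ^ ((4:ℝ)⁻¹) * |ξ t|) with hg
    have hfm : AEMeasurable f (volume.restrict (Ioc (0:ℝ) r)) := by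
      apply Measurable.aemeasurable
      apply Measurable.ennreal_ofReal
      exact ((measurable_id.div_const r).pow measurable_const).mul
        (measurable_id.pow measurable_const)
    have hgm : AEMeasurable g (volume.restrict (Ioc (0:ℝ) r)) := by
      apply Measurable.aemeasurable
      apply Measurable.ennreal_ofReal
      exact (((measurable_id.div_const r).pow measurable_const).mul
        (measurable_id.pow measurable_const)).mul hξ.abs
    -- pointwise facts on Ioc 0 r
    have hfg : ∀ t ∈ Ioc (0:ℝ) r,
        ENNReal.ofReal ((t / r) ^ lam * |ξ t|) = (f * g) t := by
      intro t ht
      obtain ⟨ht0, htr⟩ := ht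
      have hx0 : (0:ℝ) < t / r := div_pos ht0 hr0
      have e1 : (t / r) ^ (lam / 2) * (t / r) ^ (lam / 2) = (t / r) ^ lam := by
        rw [← Real.rpow_add hx0]; ring_nf
      have e2 : t ^ (-(4:ℝ)⁻¹) * t ^ ((4:ℝ)⁻¹) = 1 := by
        rw [← Real.rpow_add ht0]; norm_num
      simp only [hf, hg, Pi.mul_apply]
      rw [← ENNReal.ofReal_mul (by positivity)]
      congr 1
      calc (t / r) ^ lam * |ξ t|
          = ((t / r) ^ (lam / 2) * (t / r) ^ (lam / 2))
            * (t ^ (-(4:ℝ)⁻¹) * t ^ ((4:ℝ)⁻¹)) * |ξ t| := by rw [e1, e2]; ring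
        _ = (t / r) ^ (lam / 2) * t ^ (-(4:ℝ)⁻¹)
            * ((t / r) ^ (lam / 2) * t ^ ((4:ℝ)⁻¹) * |ξ t|) := by ring
    have hf2 : ∀ t ∈ Ioc (0:ℝ) r,
        f t ^ (2:ℝ) = ENNReal.ofReal ((t / r) ^ lam * t ^ (-(2:ℝ)⁻¹)) := by
      intro t ht
      obtain ⟨ht0, htr⟩ := ht
      have hx0 : (0:ℝ) ≤ t / r := (div_pos ht0 hr0).le
      rw [hf, ENNReal.ofReal_rpow_of_nonneg (by positivity) (by norm_num)]
      congr 1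
      have a1 : ((t / r) ^ (lam / 2)) ^ (2:ℝ) = (t / r) ^ lam := by
        rw [← Real.rpow_mul hx0]; norm_num
      have a2 : (t ^ (-(4:ℝ)⁻¹)) ^ (2:ℝ) = t ^ (-(2:ℝ)⁻¹) := by
        rw [← Real.rpow_mul ht0.le]; norm_num
      rw [Real.mul_rpow (by positivity) (by positivity), a1, a2]
    have hg2 : ∀ t ∈ Ioc (0:ℝ) r,
        g t ^ (2:ℝ) = ENNReal.ofReal ((t / r) ^ lam * t ^ ((2:ℝ)⁻¹) * ξ t ^ 2) := by
      intro t ht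
      obtain ⟨ht0, htr⟩ := ht
      have hx0 : (0:ℝ) ≤ t / r := (div_pos ht0 hr0).le
      rw [hg, ENNReal.ofReal_rpow_of_nonneg (by positivity) (by norm_num)]
      congr 1
      have a1 : ((t / r) ^ (lam / 2)) ^ (2:ℝ) = (t / r) ^ lam := by
        rw [← Real.rpow_mul hx0]; norm_num
      have a2 : (t ^ ((4:ℝ)⁻¹)) ^ (2:ℝ) = t ^ ((2:ℝ)⁻¹) := by
        rw [← Real.rpow_mul ht0.le]; norm_num
      have a3 : |ξ t| ^ (2:ℝ) = ξ t ^ 2 := by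
        rw [show ((2:ℝ)) = ((2:ℕ):ℝ) by norm_num, Real.rpow_natCast, sq_abs]
      rw [Real.mul_rpow (by positivity) (abs_nonneg _),
        Real.mul_rpow (by positivity) (by positivity), a1, a2, a3]
    -- bound on ∫ f^2
    have hA : (∫⁻ t in Ioc (0:ℝ) r, f t ^ (2:ℝ)) ≤ ENNReal.ofReal (r ^ ((2:ℝ)⁻¹)) := by
      rw [setLIntegral_congr_fun measurableSet_Ioc hf2]
      have hb : ∀ t ∈ Ioc (0:ℝ) r,
          ENNReal.ofReal ((t / r) ^ lam * t ^ (-(2:ℝ)⁻¹))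
            ≤ ENNReal.ofReal (r ^ (-(2:ℝ)⁻¹)) := by
        intro t ht
        obtain ⟨ht0, htr⟩ := ht
        apply ENNReal.ofReal_le_ofReal
        have hx0 : (0:ℝ) < t / r := div_pos ht0 hr0
        have hx1 : t / r ≤ 1 := (div_le_one hr0).2 htr
        have h1 : (t / r) ^ lam ≤ (t / r) ^ ((2:ℝ)⁻¹) :=
          Real.rpow_le_rpow_of_exponent_ge hx0 hx1 hlam'
        have h2 : (t / r) ^ ((2:ℝ)⁻¹) * t ^ (-(2:ℝ)⁻¹) = r ^ (-(2:ℝ)⁻¹) := by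
          rw [Real.div_rpow ht0.le hr0.le, Real.rpow_neg ht0.le, Real.rpow_neg hr0.le]
          have hz : t ^ ((2:ℝ)⁻¹) ≠ 0 := (Real.rpow_pos_of_pos ht0 _).ne'
          field_simp
        calc (t / r) ^ lam * t ^ (-(2:ℝ)⁻¹)
            ≤ (t / r) ^ ((2:ℝ)⁻¹) * t ^ (-(2:ℝ)⁻¹) :=
              mul_le_mul_of_nonneg_right h1 (Real.rpow_nonneg ht0.le _)
          _ = r ^ (-(2:ℝ)⁻¹) := h2
      calc (∫⁻ t in Ioc (0:ℝ) r, ENNReal.ofReal ((t / r) ^ lam * t ^ (-(2:ℝ)⁻¹)))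
          ≤ ∫⁻ _t in Ioc (0:ℝ) r, ENNReal.ofReal (r ^ (-(2:ℝ)⁻¹)) :=
            setLIntegral_mono measurable_const hb
        _ = ENNReal.ofReal (r ^ (-(2:ℝ)⁻¹)) * volume (Ioc (0:ℝ) r) :=
            setLIntegral_const _ _
        _ = ENNReal.ofReal (r ^ ((2:ℝ)⁻¹)) := by
            rw [Real.volume_Ioc, sub_zero, ← ENNReal.ofReal_mul (by positivity)]
            congr 1
            rw [Real.rpow_neg hr0.le]
            rw [inv_mul_eq_div, div_eq_iff (Real.rpow_pos_of_pos hr0 _).ne']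
            rw [← Real.rpow_add hr0]
            norm_num
    -- Cauchy-Schwarz
    have hcs : (∫⁻ t in Ioc (0:ℝ) r, ENNReal.ofReal ((t / r) ^ lam * |ξ t|))
        ≤ (∫⁻ t in Ioc (0:ℝ) r, f t ^ (2:ℝ)) ^ ((1:ℝ)/2)
          * (∫⁻ t in Ioc (0:ℝ) r, g t ^ (2:ℝ)) ^ ((1:ℝ)/2) := by
      rw [setLIntegral_congr_fun measurableSet_Ioc hfg]
      exact ENNReal.lintegral_mul_le_Lp_mul_Lq _ (by constructor <;> norm_num) hfm hgm
    have hsq : (∫⁻ t in Ioc (0:ℝ) r, ENNReal.ofReal ((t / r) ^ lam * |ξ t|)) ^ 2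
        ≤ (∫⁻ t in Ioc (0:ℝ) r, f t ^ (2:ℝ)) * (∫⁻ t in Ioc (0:ℝ) r, g t ^ (2:ℝ)) := by
      calc (∫⁻ t in Ioc (0:ℝ) r, ENNReal.ofReal ((t / r) ^ lam * |ξ t|)) ^ 2
          ≤ ((∫⁻ t in Ioc (0:ℝ) r, f t ^ (2:ℝ)) ^ ((1:ℝ)/2)
            * (∫⁻ t in Ioc (0:ℝ) r, g t ^ (2:ℝ)) ^ ((1:ℝ)/2)) ^ 2 :=
            pow_le_pow_left₀ zero_le hcs 2
        _ = _ := by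
            rw [mul_pow, ← ENNReal.rpow_natCast (_ ^ ((1:ℝ)/2)) 2,
              ← ENNReal.rpow_natCast (_ ^ ((1:ℝ)/2)) 2,
              ← ENNReal.rpow_mul, ← ENNReal.rpow_mul]
            norm_num
    -- combine
    have hB : ENNReal.ofReal (r ^ ((2:ℝ)⁻¹)) * (∫⁻ t in Ioc (0:ℝ) r, g t ^ (2:ℝ)) ≤ C := by
      rw [setLIntegral_congr_fun measurableSet_Ioc hg2,
        ← lintegral_const_mul' _ _ ENNReal.ofReal_ne_top]
      have hb : ∀ t ∈ Ioc (0:ℝ) r,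
          ENNReal.ofReal (r ^ ((2:ℝ)⁻¹))
              * ENNReal.ofReal ((t / r) ^ lam * t ^ ((2:ℝ)⁻¹) * ξ t ^ 2)
            ≤ ENNReal.ofReal (ξ t ^ 2) := by
        intro t ht
        obtain ⟨ht0, htr⟩ := ht
        rw [← ENNReal.ofReal_mul (by positivity)]
        apply ENNReal.ofReal_le_ofReal
        have hx0 : (0:ℝ) < t / r := div_pos ht0 hr0
        have hx1 : t / r ≤ 1 := (div_le_one hr0).2 htr
        have h1 : (t / r) ^ lam ≤ (t / r) ^ ((2:ℝ)⁻¹) :=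
          Real.rpow_le_rpow_of_exponent_ge hx0 hx1 hlam'
        have h2 : r ^ ((2:ℝ)⁻¹) * ((t / r) ^ ((2:ℝ)⁻¹) * t ^ ((2:ℝ)⁻¹)) = t := by
          have hz : r ^ ((2:ℝ)⁻¹) ≠ 0 := (Real.rpow_pos_of_pos hr0 _).ne'
          have htt : t ^ ((2:ℝ)⁻¹) * t ^ ((2:ℝ)⁻¹) = t := by
            rw [← Real.rpow_add ht0]; norm_num
          rw [Real.div_rpow ht0.le hr0.le]
          calc r ^ ((2:ℝ)⁻¹) * (t ^ ((2:ℝ)⁻¹) / r ^ ((2:ℝ)⁻¹) * t ^ ((2:ℝ)⁻¹))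
              = (t ^ ((2:ℝ)⁻¹) * t ^ ((2:ℝ)⁻¹)) * (r ^ ((2:ℝ)⁻¹) / r ^ ((2:ℝ)⁻¹)) := by
                ring
            _ = t := by rw [div_self hz, htt, mul_one]
        have ht1 : t ≤ 1 := htr.trans hr1
        have hR : (0:ℝ) ≤ r ^ ((2:ℝ)⁻¹) := Real.rpow_nonneg hr0.le _
        have hT : (0:ℝ) ≤ t ^ ((2:ℝ)⁻¹) := Real.rpow_nonneg ht0.le _
        have hs : (0:ℝ) ≤ ξ t ^ 2 := sq_nonneg _
        calc r ^ ((2:ℝ)⁻¹) * ((t / r) ^ lam * t ^ ((2:ℝ)⁻¹) * ξ t ^ 2)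
            ≤ r ^ ((2:ℝ)⁻¹) * ((t / r) ^ ((2:ℝ)⁻¹) * t ^ ((2:ℝ)⁻¹) * ξ t ^ 2) := by
              apply mul_le_mul_of_nonneg_left _ hR
              apply mul_le_mul_of_nonneg_right _ hs
              exact mul_le_mul_of_nonneg_right h1 hT
          _ = t * ξ t ^ 2 := by linear_combination ξ t ^ 2 * h2
          _ ≤ 1 * ξ t ^ 2 := mul_le_mul_of_nonneg_right ht1 hs
          _ = ξ t ^ 2 := one_mul _
      calc (∫⁻ t in Ioc (0:ℝ) r, ENNReal.ofReal (r ^ ((2:ℝ)⁻¹))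
              * ENNReal.ofReal ((t / r) ^ lam * t ^ ((2:ℝ)⁻¹) * ξ t ^ 2))
          ≤ ∫⁻ t in Ioc (0:ℝ) r, ENNReal.ofReal (ξ t ^ 2) :=
            setLIntegral_mono (hξ.pow_const 2).ennreal_ofReal hb
        _ ≤ C := lintegral_mono_set (Ioc_subset_Ioc_right hr1)
    calc (∫⁻ t in Ioc (0:ℝ) r, ENNReal.ofReal ((t / r) ^ lam * |ξ t|)) ^ 2
        ≤ (∫⁻ t in Ioc (0:ℝ) r, f t ^ (2:ℝ)) * (∫⁻ t in Ioc (0:ℝ) r, g t ^ (2:ℝ)) := hsq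
      _ ≤ ENNReal.ofReal (r ^ ((2:ℝ)⁻¹)) * (∫⁻ t in Ioc (0:ℝ) r, g t ^ (2:ℝ)) :=
          mul_le_mul_left hA _
      _ ≤ C := hB
  calc (∫⁻ r in Ioc (0:ℝ) 1,
          (∫⁻ t in Ioc (0:ℝ) r, ENNReal.ofReal ((t / r) ^ lam * |ξ t|)) ^ 2)
      ≤ ∫⁻ _r in Ioc (0:ℝ) 1, C := setLIntegral_mono measurable_const key
    _ = C * volume (Ioc (0:ℝ) 1) := setLIntegral_const _ _
    _ = C := by rw [Real.volume_Ioc]; norm_num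
end

section
/- For every real number λ ≤ −1/2 and every measurable function ξ : ℝ → ℝ, one has ∫₀¹ ( ∫ᵣ¹ (t/r)^λ · |ξ(t)| dt )² dr ≤ ∫₀¹ ξ(t)² dt, where all integrals are Lebesgue integrals and the inequality is read in [0, ∞]. -/
open MeasureTheory Set
open scoped ENNReal NNReal

private lemma pt_bound (lam : ℝ) (hlam : lam ≤ -(1 : ℝ) / 2) {r t : ℝ} (hr : 0 < r)
    (hrt : r < t) (x : ℝ) :
    ENNReal.ofReal ((t / r) ^ lam * |x|) ≤
      ENNReal.ofReal ((r / t) ^ ((1:ℝ)/2) * t ^ ((1:ℝ)/2)) ^ ((1:ℝ)/2) *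
      ENNReal.ofReal ((r / t) ^ ((1:ℝ)/2) * t ^ (-((1:ℝ)/2)) * x ^ 2) ^ ((1:ℝ)/2) := by
  have ht : 0 < t := hr.trans hrt
  have hrt1 : (1:ℝ) ≤ t / r := (one_le_div hr).2 hrt.le
  have hdiv : 0 < r / t := div_pos hr ht
  -- step 1 : (t/r)^lam ≤ (r/t)^(1/2)
  have h1 : (t / r) ^ lam ≤ (r / t) ^ ((1:ℝ)/2) := by
    have h := Real.rpow_le_rpow_of_exponent_le hrt1 (by linarith : lam ≤ -((1:ℝ)/2))
    calc (t/r) ^ lam ≤ (t/r) ^ (-((1:ℝ)/2)) := h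
      _ = (r/t) ^ ((1:ℝ)/2) := by
          rw [Real.rpow_neg (by positivity), ← Real.inv_rpow (by positivity), inv_div]
  -- step 2 : factorization in reals
  have h2 : ((r / t) ^ ((1:ℝ)/2) * t ^ ((1:ℝ)/2)) ^ ((1:ℝ)/2) *
      ((r / t) ^ ((1:ℝ)/2) * t ^ (-((1:ℝ)/2)) * x ^ 2) ^ ((1:ℝ)/2)
      = (r/t) ^ ((1:ℝ)/2) * |x| := by
    rw [← Real.mul_rpow (by positivity) (by positivity)]
    have : (r / t) ^ ((1:ℝ)/2) * t ^ ((1:ℝ)/2) *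
        ((r / t) ^ ((1:ℝ)/2) * t ^ (-((1:ℝ)/2)) * x ^ 2) = (r/t) * x^2 := by
      rw [show (r / t) ^ ((1:ℝ)/2) * t ^ ((1:ℝ)/2) *
        ((r / t) ^ ((1:ℝ)/2) * t ^ (-((1:ℝ)/2)) * x ^ 2)
        = ((r / t) ^ ((1:ℝ)/2) * (r / t) ^ ((1:ℝ)/2)) * (t ^ ((1:ℝ)/2) * t ^ (-((1:ℝ)/2))) * x ^ 2
        by ring,
        ← Real.rpow_add hdiv, ← Real.rpow_add ht]
      norm_num
    rw [this, Real.mul_rpow hdiv.le (by positivity)]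
    congr 1
    rw [← sq_abs, ← Real.rpow_natCast |x| 2, ← Real.rpow_mul (abs_nonneg x)]
    norm_num
  calc ENNReal.ofReal ((t / r) ^ lam * |x|)
      ≤ ENNReal.ofReal ((r/t) ^ ((1:ℝ)/2) * |x|) :=
        ENNReal.ofReal_le_ofReal (mul_le_mul_of_nonneg_right h1 (abs_nonneg x))
    _ = ENNReal.ofReal (((r / t) ^ ((1:ℝ)/2) * t ^ ((1:ℝ)/2)) ^ ((1:ℝ)/2) *
          ((r / t) ^ ((1:ℝ)/2) * t ^ (-((1:ℝ)/2)) * x ^ 2) ^ ((1:ℝ)/2)) := by rw [h2]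
    _ = _ := by
        rw [ENNReal.ofReal_mul (by positivity),
          ENNReal.ofReal_rpow_of_nonneg (by positivity) (by norm_num),
          ENNReal.ofReal_rpow_of_nonneg (by positivity) (by norm_num)]

private lemma sqhalf (x : ℝ≥0∞) : (x ^ ((1:ℝ)/2)) ^ (2:ℕ) = x := by
  rw [← ENNReal.rpow_natCast (x ^ ((1:ℝ)/2)) 2, ← ENNReal.rpow_mul]
  norm_num

private lemma claim1 (lam : ℝ) (hlam : lam ≤ -(1 : ℝ) / 2) (ξ : ℝ → ℝ) (hξ : Measurable ξ)
    {r : ℝ} (hr : 0 < r) (hr1 : r ≤ 1) :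
    (∫⁻ t in Ioc r (1:ℝ), ENNReal.ofReal ((t / r) ^ lam * |ξ t|)) ^ 2
      ≤ ∫⁻ t in Ioc r (1:ℝ), ENNReal.ofReal (r / t * ξ t ^ 2) := by
  set f : ℝ → ℝ≥0∞ := fun t => ENNReal.ofReal ((r / t) ^ ((1:ℝ)/2) * t ^ ((1:ℝ)/2)) ^ ((1:ℝ)/2)
  set g : ℝ → ℝ≥0∞ :=
    fun t => ENNReal.ofReal ((r / t) ^ ((1:ℝ)/2) * t ^ (-((1:ℝ)/2)) * ξ t ^ 2) ^ ((1:ℝ)/2)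
  have hfm : Measurable f := by fun_prop
  have hgm : Measurable g := by fun_prop
  have hconj : Real.HolderConjugate 2 2 := Real.holderConjugate_iff.mpr ⟨one_lt_two, by norm_num⟩
  have step1 : (∫⁻ t in Ioc r (1:ℝ), ENNReal.ofReal ((t / r) ^ lam * |ξ t|))
      ≤ ∫⁻ t in Ioc r (1:ℝ), (f * g) t :=
    setLIntegral_mono (hfm.mul hgm) fun t ht => pt_bound lam hlam hr ht.1 (ξ t)
  have holder := ENNReal.lintegral_mul_le_Lp_mul_Lq (volume.restrict (Ioc r 1)) hconj
    hfm.aemeasurable hgm.aemeasurable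
  -- compute ∫ f^2
  have hA : (∫⁻ t in Ioc r (1:ℝ), f t ^ (2:ℝ)) ≤ ENNReal.ofReal (r ^ ((1:ℝ)/2)) := by
    have : ∀ t ∈ Ioc r (1:ℝ), f t ^ (2:ℝ) = ENNReal.ofReal (r ^ ((1:ℝ)/2)) := by
      intro t ht
      have ht0 : 0 < t := hr.trans ht.1
      have : (r / t) ^ ((1:ℝ)/2) * t ^ ((1:ℝ)/2) = r ^ ((1:ℝ)/2) := by
        rw [Real.div_rpow hr.le ht0.le, div_mul_cancel₀]
        exact (Real.rpow_pos_of_pos ht0 _).ne'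
      simp only [f, ← ENNReal.rpow_mul]
      rw [this]; norm_num
    rw [setLIntegral_congr_fun measurableSet_Ioc this,
      setLIntegral_const]
    calc ENNReal.ofReal (r ^ ((1:ℝ)/2)) * volume (Ioc r 1)
        ≤ ENNReal.ofReal (r ^ ((1:ℝ)/2)) * 1 := by
          gcongr
          rw [Real.volume_Ioc]
          exact ENNReal.ofReal_le_one.2 (by linarith)
      _ = _ := mul_one _
  have hgsq : ∀ t, g t ^ (2:ℝ) =
      ENNReal.ofReal ((r / t) ^ ((1:ℝ)/2) * t ^ (-((1:ℝ)/2)) * ξ t ^ 2) := by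
    intro t
    simp only [g, ← ENNReal.rpow_mul]
    norm_num
  calc (∫⁻ t in Ioc r (1:ℝ), ENNReal.ofReal ((t / r) ^ lam * |ξ t|)) ^ 2
      ≤ (∫⁻ t in Ioc r (1:ℝ), (f * g) t) ^ 2 := by gcongr
    _ ≤ ((∫⁻ t in Ioc r (1:ℝ), f t ^ (2:ℝ)) ^ ((1:ℝ)/2)
          * (∫⁻ t in Ioc r (1:ℝ), g t ^ (2:ℝ)) ^ ((1:ℝ)/2)) ^ 2 := by
        gcongr
    _ = (∫⁻ t in Ioc r (1:ℝ), f t ^ (2:ℝ)) * (∫⁻ t in Ioc r (1:ℝ), g t ^ (2:ℝ)) := by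
        rw [mul_pow, sqhalf, sqhalf]
    _ ≤ ENNReal.ofReal (r ^ ((1:ℝ)/2)) * (∫⁻ t in Ioc r (1:ℝ), g t ^ (2:ℝ)) := by gcongr
    _ = ∫⁻ t in Ioc r (1:ℝ),
          ENNReal.ofReal (r ^ ((1:ℝ)/2)) * ENNReal.ofReal ((r / t) ^ ((1:ℝ)/2) * t ^ (-((1:ℝ)/2)) * ξ t ^ 2) := by
        simp_rw [hgsq]
        rw [lintegral_const_mul _ (by fun_prop)]
    _ = _ := by
        apply setLIntegral_congr_fun measurableSet_Ioc
        intro t ht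
        beta_reduce
        have ht0 : 0 < t := hr.trans ht.1
        rw [← ENNReal.ofReal_mul (by positivity)]
        congr 1
        rw [show r ^ ((1:ℝ)/2) * ((r / t) ^ ((1:ℝ)/2) * t ^ (-((1:ℝ)/2)) * ξ t ^ 2)
          = (r ^ ((1:ℝ)/2) * (r/t) ^ ((1:ℝ)/2) * t ^ (-((1:ℝ)/2))) * ξ t ^ 2 by ring]
        congr 1
        have hrr : r ^ ((1:ℝ)/2) * r ^ ((1:ℝ)/2) = r := by
          rw [← Real.rpow_add hr]; norm_num
        have htt : t ^ ((1:ℝ)/2) * t ^ ((1:ℝ)/2) = t := by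
          rw [← Real.rpow_add ht0]; norm_num
        have ht2 : t ^ ((1:ℝ)/2) ≠ 0 := (Real.rpow_pos_of_pos ht0 _).ne'
        rw [Real.div_rpow hr.le ht0.le, Real.rpow_neg ht0.le]
        field_simp
        linear_combination t * hrr - r * htt

private lemma intval {t : ℝ} (ht : 0 < t) :
    ∫⁻ r in Ioo (0:ℝ) t, ENNReal.ofReal r = ENNReal.ofReal (t ^ 2 / 2) := by
  have hint : IntegrableOn (fun r : ℝ => r) (Ioo 0 t) := by
    exact (Continuous.integrableOn_Icc continuous_id).mono_set Ioo_subset_Icc_self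
  rw [← ofReal_integral_eq_lintegral_ofReal hint]
  · congr 1
    rw [← integral_Ioc_eq_integral_Ioo, ← intervalIntegral.integral_of_le ht.le,
      integral_id]
    ring
  · exact Filter.Eventually.mono (ae_restrict_mem measurableSet_Ioo) fun x hx => hx.1.le

private lemma claim2 (ξ : ℝ → ℝ) (hξ : Measurable ξ) :
    (∫⁻ r in Ioc (0:ℝ) 1, ∫⁻ t in Ioc r (1:ℝ), ENNReal.ofReal (r / t * ξ t ^ 2))
      ≤ ∫⁻ t in Ioc (0:ℝ) 1, ENNReal.ofReal (ξ t ^ 2) := by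
  set H : ℝ → ℝ → ℝ≥0∞ :=
    fun r t => (Ioi r).indicator (fun s => ENNReal.ofReal (r / s * ξ s ^ 2)) t with hH
  have hmeas : AEMeasurable (Function.uncurry H)
      ((volume.restrict (Ioc (0:ℝ) 1)).prod (volume.restrict (Ioc (0:ℝ) 1))) := by
    have : Function.uncurry H = fun p : ℝ × ℝ =>
        ({q : ℝ × ℝ | q.1 < q.2}).indicator
          (fun q : ℝ × ℝ => ENNReal.ofReal (q.1 / q.2 * ξ q.2 ^ 2)) p := by
      funext p
      simp only [Function.uncurry, hH, Set.indicator_apply, mem_Ioi, mem_setOf_eq]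
    rw [this]
    exact (Measurable.indicator (by fun_prop)
      (measurableSet_lt measurable_fst measurable_snd)).aemeasurable
  have step1 : (∫⁻ r in Ioc (0:ℝ) 1, ∫⁻ t in Ioc r (1:ℝ), ENNReal.ofReal (r / t * ξ t ^ 2))
      = ∫⁻ r in Ioc (0:ℝ) 1, ∫⁻ t in Ioc (0:ℝ) 1, H r t := by
    apply setLIntegral_congr_fun measurableSet_Ioc
    intro r hr
    simp only [hH]
    rw [lintegral_indicator measurableSet_Ioi, Measure.restrict_restrict measurableSet_Ioi,
      inter_comm, Ioc_inter_Ioi, max_eq_right hr.1.le]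
  rw [step1, lintegral_lintegral_swap hmeas]
  apply lintegral_mono_ae
  refine Filter.Eventually.mono (ae_restrict_mem measurableSet_Ioc) fun t ht => ?_
  have ht0 : 0 < t := ht.1
  have hfun : (fun r => H r t) = (Iio t).indicator (fun r => ENNReal.ofReal (r / t * ξ t ^ 2)) := by
    funext r
    simp only [hH, Set.indicator_apply, mem_Ioi, mem_Iio]
  calc (∫⁻ r in Ioc (0:ℝ) 1, H r t)
      = ∫⁻ r in Ioo (0:ℝ) t, ENNReal.ofReal (r / t * ξ t ^ 2) := by
        have hset : Iio t ∩ Ioc (0:ℝ) 1 = Ioo 0 t := by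
          ext x
          simp only [mem_inter_iff, mem_Iio, mem_Ioc, mem_Ioo]
          constructor
          · rintro ⟨h1, h2, h3⟩; exact ⟨h2, h1⟩
          · rintro ⟨h1, h2⟩; exact ⟨h2, h1, h2.le.trans ht.2⟩
        rw [hfun, lintegral_indicator measurableSet_Iio,
          Measure.restrict_restrict measurableSet_Iio, hset]
    _ = ENNReal.ofReal (ξ t ^ 2 / t) * ∫⁻ r in Ioo (0:ℝ) t, ENNReal.ofReal r := by
        rw [← lintegral_const_mul _ ENNReal.measurable_ofReal]
        apply setLIntegral_congr_fun measurableSet_Ioo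
        intro r hr
        beta_reduce
        rw [← ENNReal.ofReal_mul (by positivity)]
        congr 1
        field_simp
    _ = ENNReal.ofReal (ξ t ^ 2 / t * (t ^ 2 / 2)) := by
        rw [intval ht0, ← ENNReal.ofReal_mul (by positivity)]
    _ ≤ ENNReal.ofReal (ξ t ^ 2) := by
        apply ENNReal.ofReal_le_ofReal
        rw [div_mul_eq_mul_div, mul_div_assoc]
        have h2 : t ^ 2 / 2 / t = t / 2 := by field_simp
        rw [h2]
        nlinarith [sq_nonneg (ξ t), ht.2, ht0]

theorem stmt_7 (lam : ℝ) (hlam : lam ≤ -(1 : ℝ) / 2) (ξ : ℝ → ℝ) (hξ : Measurable ξ) :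
    (∫⁻ r in Ioc (0:ℝ) 1,
        (∫⁻ t in Ioc r (1:ℝ), ENNReal.ofReal ((t / r) ^ lam * |ξ t|)) ^ 2)
      ≤ ∫⁻ t in Ioc (0:ℝ) 1, ENNReal.ofReal (ξ t ^ 2) := by
  refine le_trans (lintegral_mono_ae ?_) (claim2 ξ hξ)
  exact Filter.Eventually.mono (ae_restrict_mem measurableSet_Ioc)
    fun r hr => claim1 lam hlam ξ hξ hr.1 hr.2
end

section
/- For every real number λ ≥ 1/2 and every measurable function ξ : ℝ → ℝ, one has ∫₀¹ (λ/r)² · ( ∫₀ʳ (t/r)^λ · |ξ(t)| dt )² dr ≤ ∫₀¹ ξ(t)² dt, where all integrals are Lebesgue integrals and the inequality is read in [0, ∞]. -/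
open MeasureTheory Set
open scoped ENNReal Interval

/-- Cauchy–Schwarz inequality for lower Lebesgue integrals. -/
lemma stmt8_cs {α : Type*} [MeasurableSpace α] (μ : Measure α) (f g : α → ℝ≥0∞)
    (hf : AEMeasurable f μ) (hg : AEMeasurable g μ) :
    (∫⁻ a, f a * g a ∂μ) ^ 2 ≤ (∫⁻ a, f a ^ 2 ∂μ) * (∫⁻ a, g a ^ 2 ∂μ) := by
  have hpq : Real.HolderConjugate 2 2 := Real.HolderConjugate.two_two
  have h := ENNReal.lintegral_mul_le_Lp_mul_Lq μ hpq hf hg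
  have h2 : ∀ h' : α → ℝ≥0∞, (fun a => h' a ^ (2:ℝ)) = fun a => h' a ^ 2 := by
    intro h'; funext a; rw [← ENNReal.rpow_natCast (h' a) 2]; norm_num
  calc (∫⁻ a, f a * g a ∂μ) ^ 2
      ≤ ((∫⁻ a, f a ^ (2:ℝ) ∂μ) ^ (1/(2:ℝ)) * (∫⁻ a, g a ^ (2:ℝ) ∂μ) ^ (1/(2:ℝ))) ^ 2 := by
        gcongr; exact h
    _ = (∫⁻ a, f a ^ 2 ∂μ) * (∫⁻ a, g a ^ 2 ∂μ) := by
        rw [mul_pow, ← ENNReal.rpow_natCast (_ ^ (1/(2:ℝ))) 2,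
          ← ENNReal.rpow_natCast (_ ^ (1/(2:ℝ))) 2,
          ← ENNReal.rpow_mul, ← ENNReal.rpow_mul, h2 f, h2 g]
        norm_num

/-- Integral of a nonnegative power on `Ioc 0 r`. -/
lemma stmt8_pow_integral (r p : ℝ) (hr : 0 < r) (hp : 0 ≤ p) :
    ∫⁻ t in Ioc (0:ℝ) r, ENNReal.ofReal (t ^ p) = ENNReal.ofReal (r ^ (p+1) / (p+1)) := by
  have hint : IntegrableOn (fun t : ℝ => t ^ p) (Ioc 0 r) := by
    rw [← intervalIntegrable_iff_integrableOn_Ioc_of_le hr.le]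
    exact intervalIntegral.intervalIntegrable_rpow (Or.inl hp)
  rw [← ofReal_integral_eq_lintegral_ofReal hint
    ((ae_restrict_iff' measurableSet_Ioc).2 (ae_of_all _ fun t ht => Real.rpow_nonneg ht.1.le p))]
  congr 1
  rw [← intervalIntegral.integral_of_le hr.le, integral_rpow (Or.inl (by linarith))]
  rw [Real.zero_rpow (by linarith)]
  ring

/-- Tail integral of a negative power. -/
lemma stmt8_tail (t q : ℝ) (ht : 0 < t) (ht1 : t ≤ 1) (hq : 1 < q) :
    ∫⁻ r in Ioc t 1, ENNReal.ofReal (r ^ (-q)) ≤ ENNReal.ofReal (t ^ (1-q) / (q-1)) := by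
  have h0 : (0:ℝ) ∉ [[t, 1]] := by
    rw [Set.uIcc_of_le ht1]; simp only [mem_Icc, not_and_or, not_le]; left; exact ht
  have hint : IntegrableOn (fun r : ℝ => r ^ (-q)) (Ioc t 1) := by
    rw [← intervalIntegrable_iff_integrableOn_Ioc_of_le ht1]
    exact intervalIntegral.intervalIntegrable_rpow (Or.inr h0)
  rw [← ofReal_integral_eq_lintegral_ofReal hint
    ((ae_restrict_iff' measurableSet_Ioc).2 (ae_of_all _ fun r hr =>
      Real.rpow_nonneg (ht.trans_le hr.1.le).le _))]
  apply ENNReal.ofReal_le_ofReal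
  rw [← intervalIntegral.integral_of_le ht1, integral_rpow (Or.inr ⟨by linarith, h0⟩),
    Real.one_rpow]
  rw [show (1:ℝ)-q = -q+1 by ring]
  rw [show (1 - t ^ (-q+1)) / (-q + 1) = (t ^ (-q+1) - 1)/(q-1) by
    rw [div_eq_div_iff (by linarith) (by linarith)]; ring]
  gcongr
  · linarith

theorem stmt_8 (lam : ℝ) (hlam : (1 : ℝ) / 2 ≤ lam) (ξ : ℝ → ℝ) (hξ : Measurable ξ) :
    (∫⁻ r in Ioc (0:ℝ) 1,
        ENNReal.ofReal ((lam / r) ^ 2) *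
          (∫⁻ t in Ioc (0:ℝ) r, ENNReal.ofReal ((t / r) ^ lam * |ξ t|)) ^ 2)
      ≤ ∫⁻ t in Ioc (0:ℝ) 1, ENNReal.ofReal (ξ t ^ 2) := by
  have hl0 : (0:ℝ) < lam := lt_of_lt_of_le (by norm_num) hlam
  have hl2 : (0:ℝ) < lam + 1/2 := by linarith
  set C : ℝ → ℝ≥0∞ := fun t => ENNReal.ofReal (lam * (t ^ (lam + 1/2) * ξ t ^ 2)) with hCdef
  set W : ℝ → ℝ → ℝ≥0∞ :=
    fun r t => if t ≤ r then C t * ENNReal.ofReal (r ^ (-(lam + 3/2))) else 0 with hWdef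
  have hCm : Measurable C := by fun_prop
  -- Step 1: pointwise bound for each r ∈ Ioc 0 1
  have key1 : ∀ r ∈ Ioc (0:ℝ) 1,
      ENNReal.ofReal ((lam / r) ^ 2) *
          (∫⁻ t in Ioc (0:ℝ) r, ENNReal.ofReal ((t / r) ^ lam * |ξ t|)) ^ 2
        ≤ ∫⁻ t in Ioc (0:ℝ) 1, W r t := by
    rintro r ⟨hr, hr1⟩
    set F : ℝ → ℝ≥0∞ := fun t => ENNReal.ofReal (t ^ (lam/2 - 1/4) / r ^ (lam/2)) with hFdef
    set G : ℝ → ℝ≥0∞ :=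
      fun t => ENNReal.ofReal (t ^ (lam/2 + 1/4) / r ^ (lam/2) * |ξ t|) with hGdef
    have hFm : Measurable F := by fun_prop
    have hGm : Measurable G := by fun_prop
    -- pointwise factorization
    have hFG : ∀ t ∈ Ioc (0:ℝ) r,
        ENNReal.ofReal ((t / r) ^ lam * |ξ t|) = F t * G t := by
      intro t ht
      have ht0 : 0 < t := ht.1
      rw [hFdef, hGdef, ← ENNReal.ofReal_mul (by positivity)]
      congr 1
      rw [Real.div_rpow ht0.le hr.le]
      have e1 : t ^ (lam/2 - 1/4) * t ^ (lam/2 + 1/4) = t ^ lam := by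
        rw [← Real.rpow_add ht0]; ring_nf
      have e2 : r ^ (lam/2) * r ^ (lam/2) = r ^ lam := by
        rw [← Real.rpow_add hr]; ring_nf
      rw [show (t ^ (lam/2 - 1/4) / r ^ (lam/2)) * (t ^ (lam/2+1/4) / r ^ (lam/2) * |ξ t|)
          = (t ^ (lam/2 - 1/4) * t ^ (lam/2+1/4)) / (r ^ (lam/2) * r ^ (lam/2)) * |ξ t| by
            ring, e1, e2]
    -- compute ∫ F²
    have hIF : (∫⁻ t in Ioc (0:ℝ) r, F t ^ 2)
        = ENNReal.ofReal (r ^ ((1:ℝ)/2) / (lam + 1/2)) := by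
      have hF2 : ∀ t ∈ Ioc (0:ℝ) r,
          F t ^ 2 = ENNReal.ofReal ((1 / r ^ lam)) * ENNReal.ofReal (t ^ (lam - 1/2)) := by
        intro t ht
        have ht0 : 0 < t := ht.1
        rw [hFdef, sq, ← ENNReal.ofReal_mul (by positivity), ← ENNReal.ofReal_mul (by positivity)]
        congr 1
        have e1 : t ^ (lam/2 - 1/4) * t ^ (lam/2 - 1/4) = t ^ (lam - 1/2) := by
          rw [← Real.rpow_add ht0]; ring_nf
        have e2 : r ^ (lam/2) * r ^ (lam/2) = r ^ lam := by
          rw [← Real.rpow_add hr]; ring_nf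
        rw [show t ^ (lam/2 - 1/4) / r ^ (lam/2) * (t ^ (lam/2 - 1/4) / r ^ (lam/2))
            = (t ^ (lam/2 - 1/4) * t ^ (lam/2 - 1/4)) / (r ^ (lam/2) * r ^ (lam/2)) by ring,
          e1, e2]
        ring
      rw [setLIntegral_congr_fun_ae measurableSet_Ioc (ae_of_all _ hF2),
        lintegral_const_mul' _ _ ENNReal.ofReal_ne_top,
        stmt8_pow_integral r (lam - 1/2) hr (by linarith),
        ← ENNReal.ofReal_mul (by positivity)]
      congr 1
      have e3 : r ^ (lam - 1/2 + 1) = r ^ lam * r ^ ((1:ℝ)/2) := by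
        rw [← Real.rpow_add hr]; ring_nf
      have hrl : r ^ lam ≠ 0 := (Real.rpow_pos_of_pos hr lam).ne'
      rw [e3, show lam - 1/2 + 1 = lam + 1/2 by ring]
      field_simp
    -- compute G²
    have hG2 : ∀ t ∈ Ioc (0:ℝ) r,
        G t ^ 2 = ENNReal.ofReal (t ^ (lam + 1/2) / r ^ lam * ξ t ^ 2) := by
      intro t ht
      have ht0 : 0 < t := ht.1
      rw [hGdef, sq, ← ENNReal.ofReal_mul (by positivity)]
      congr 1
      have e1 : t ^ (lam/2 + 1/4) * t ^ (lam/2 + 1/4) = t ^ (lam + 1/2) := by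
        rw [← Real.rpow_add ht0]; ring_nf
      have e2 : r ^ (lam/2) * r ^ (lam/2) = r ^ lam := by
        rw [← Real.rpow_add hr]; ring_nf
      rw [show t ^ (lam/2 + 1/4) / r ^ (lam/2) * |ξ t| * (t ^ (lam/2 + 1/4) / r ^ (lam/2) * |ξ t|)
          = (t ^ (lam/2 + 1/4) * t ^ (lam/2 + 1/4)) / (r ^ (lam/2) * r ^ (lam/2))
              * (|ξ t| * |ξ t|) by ring, e1, e2, ← sq, sq_abs]
    -- Cauchy–Schwarz
    have hCS := stmt8_cs (volume.restrict (Ioc (0:ℝ) r)) F G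
      hFm.aemeasurable hGm.aemeasurable
    calc ENNReal.ofReal ((lam / r) ^ 2) *
            (∫⁻ t in Ioc (0:ℝ) r, ENNReal.ofReal ((t / r) ^ lam * |ξ t|)) ^ 2
        = ENNReal.ofReal ((lam / r) ^ 2) * (∫⁻ t in Ioc (0:ℝ) r, F t * G t) ^ 2 := by
          rw [setLIntegral_congr_fun_ae measurableSet_Ioc (ae_of_all _ hFG)]
      _ ≤ ENNReal.ofReal ((lam / r) ^ 2) *
            ((∫⁻ t in Ioc (0:ℝ) r, F t ^ 2) * ∫⁻ t in Ioc (0:ℝ) r, G t ^ 2) := by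
          gcongr
      _ = ENNReal.ofReal ((lam / r) ^ 2 * (r ^ ((1:ℝ)/2) / (lam + 1/2))) *
            ∫⁻ t in Ioc (0:ℝ) r, G t ^ 2 := by
          rw [hIF, ← mul_assoc, ← ENNReal.ofReal_mul (by positivity)]
      _ = ∫⁻ t in Ioc (0:ℝ) r,
            ENNReal.ofReal ((lam / r) ^ 2 * (r ^ ((1:ℝ)/2) / (lam + 1/2))) * G t ^ 2 := by
          rw [lintegral_const_mul' _ _ ENNReal.ofReal_ne_top]
      _ ≤ ∫⁻ t in Ioc (0:ℝ) r, C t * ENNReal.ofReal (r ^ (-(lam + 3/2))) := by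
          apply setLIntegral_mono' measurableSet_Ioc
          intro t ht
          have ht0 : 0 < t := ht.1
          rw [hG2 t ht, hCdef, ← ENNReal.ofReal_mul (by positivity),
            ← ENNReal.ofReal_mul (by positivity)]
          apply ENNReal.ofReal_le_ofReal
          have hrpow : r ^ (-(lam + 3/2)) = r ^ ((1:ℝ)/2) / (r ^ 2 * r ^ lam) := by
            rw [show -(lam + 3/2) = (1:ℝ)/2 - ((2:ℝ) + lam) by ring, Real.rpow_sub hr,
              Real.rpow_add hr]
            norm_num [Real.rpow_two]
          rw [hrpow]
          have hD : (0:ℝ) ≤ t ^ (lam + 1/2) * ξ t ^ 2 * (r ^ ((1:ℝ)/2) / (r ^ 2 * r ^ lam)) := by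
            positivity
          calc (lam / r) ^ 2 * (r ^ ((1:ℝ)/2) / (lam + 1/2)) *
                  (t ^ (lam + 1/2) / r ^ lam * ξ t ^ 2)
              = lam ^ 2 / (lam + 1/2) *
                  (t ^ (lam + 1/2) * ξ t ^ 2 * (r ^ ((1:ℝ)/2) / (r ^ 2 * r ^ lam))) := by
                ring
            _ ≤ lam * (t ^ (lam + 1/2) * ξ t ^ 2 * (r ^ ((1:ℝ)/2) / (r ^ 2 * r ^ lam))) := by
                apply mul_le_mul_of_nonneg_right _ hD
                rw [div_le_iff₀ hl2]; nlinarith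
            _ = lam * (t ^ (lam + 1/2) * ξ t ^ 2) * (r ^ ((1:ℝ)/2) / (r ^ 2 * r ^ lam)) := by
                ring
      _ = ∫⁻ t in Ioc (0:ℝ) 1, W r t := by
          have hfun : (fun t => W r t)
              = (Iic r).indicator (fun t => C t * ENNReal.ofReal (r ^ (-(lam + 3/2)))) := by
            funext t; simp [hWdef, Set.indicator_apply, mem_Iic]
          rw [hfun, lintegral_indicator measurableSet_Iic,
            Measure.restrict_restrict measurableSet_Iic]
          congr 1
          rw [show Iic r ∩ Ioc (0:ℝ) 1 = Ioc 0 r from ?_]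
          ext x
          simp only [mem_inter_iff, mem_Iic, mem_Ioc]
          constructor
          · rintro ⟨h1, h2, h3⟩; exact ⟨h2, h1⟩
          · rintro ⟨h1, h2⟩; exact ⟨h2, h1, h2.trans hr1⟩
  -- Step 2: swap the order of integration
  have hWm : Measurable (Function.uncurry W) := by
    have hm : Measurable fun p : ℝ × ℝ => C p.2 * ENNReal.ofReal (p.1 ^ (-(lam + 3/2))) := by
      fun_prop
    exact Measurable.ite (measurableSet_le measurable_snd measurable_fst) hm measurable_const
  have hswap : (∫⁻ r in Ioc (0:ℝ) 1, ∫⁻ t in Ioc (0:ℝ) 1, W r t)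
      = ∫⁻ t in Ioc (0:ℝ) 1, ∫⁻ r in Ioc (0:ℝ) 1, W r t :=
    lintegral_lintegral_swap hWm.aemeasurable
  -- Step 3: bound the inner integral for each t
  have key2 : ∀ t ∈ Ioc (0:ℝ) 1,
      (∫⁻ r in Ioc (0:ℝ) 1, W r t) ≤ ENNReal.ofReal (ξ t ^ 2) := by
    rintro t ⟨ht0, ht1⟩
    have hq : (1:ℝ) < lam + 3/2 := by linarith
    have h1 : (fun r => W r t)
        = (Ici t).indicator (fun r => C t * ENNReal.ofReal (r ^ (-(lam + 3/2)))) := by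
      funext r; simp [hWdef, Set.indicator_apply, mem_Ici]
    have h2 : Ici t ∩ Ioc (0:ℝ) 1 = Icc t 1 := by
      ext x
      simp only [mem_inter_iff, mem_Ici, mem_Ioc, mem_Icc]
      constructor
      · rintro ⟨a, b, c⟩; exact ⟨a, c⟩
      · rintro ⟨a, b⟩; exact ⟨a, ht0.trans_le a, b⟩
    calc (∫⁻ r in Ioc (0:ℝ) 1, W r t)
        = ∫⁻ r in Icc t 1, C t * ENNReal.ofReal (r ^ (-(lam + 3/2))) := by
          rw [h1, lintegral_indicator measurableSet_Ici,
            Measure.restrict_restrict measurableSet_Ici, h2]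
      _ = ∫⁻ r in Ioc t 1, C t * ENNReal.ofReal (r ^ (-(lam + 3/2))) := by
          exact (setLIntegral_congr Ioc_ae_eq_Icc).symm
      _ = C t * ∫⁻ r in Ioc t 1, ENNReal.ofReal (r ^ (-(lam + 3/2))) :=
          lintegral_const_mul' _ _ ENNReal.ofReal_ne_top
      _ ≤ C t * ENNReal.ofReal (t ^ (1 - (lam + 3/2)) / (lam + 3/2 - 1)) := by
          gcongr
          exact stmt8_tail t (lam + 3/2) ht0 ht1 hq
      _ ≤ ENNReal.ofReal (ξ t ^ 2) := by
          rw [hCdef, ← ENNReal.ofReal_mul (by positivity)]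
          apply ENNReal.ofReal_le_ofReal
          have e1 : t ^ (lam + 1/2) * t ^ (1 - (lam + 3/2)) = 1 := by
            rw [← Real.rpow_add ht0, show lam + 1/2 + (1 - (lam + 3/2)) = 0 by ring,
              Real.rpow_zero]
          calc lam * (t ^ (lam + 1/2) * ξ t ^ 2) *
                  (t ^ (1 - (lam + 3/2)) / (lam + 3/2 - 1))
              = lam / (lam + 1/2) * ξ t ^ 2 *
                  (t ^ (lam + 1/2) * t ^ (1 - (lam + 3/2))) := by ring_nf
            _ = lam / (lam + 1/2) * ξ t ^ 2 := by rw [e1, mul_one]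
            _ ≤ 1 * ξ t ^ 2 := by
                apply mul_le_mul_of_nonneg_right _ (sq_nonneg _)
                rw [div_le_one hl2]; linarith
            _ = ξ t ^ 2 := one_mul _
  -- put everything together
  calc (∫⁻ r in Ioc (0:ℝ) 1,
        ENNReal.ofReal ((lam / r) ^ 2) *
          (∫⁻ t in Ioc (0:ℝ) r, ENNReal.ofReal ((t / r) ^ lam * |ξ t|)) ^ 2)
      ≤ ∫⁻ r in Ioc (0:ℝ) 1, ∫⁻ t in Ioc (0:ℝ) 1, W r t :=
        setLIntegral_mono' measurableSet_Ioc key1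
    _ = ∫⁻ t in Ioc (0:ℝ) 1, ∫⁻ r in Ioc (0:ℝ) 1, W r t := hswap
    _ ≤ ∫⁻ t in Ioc (0:ℝ) 1, ENNReal.ofReal (ξ t ^ 2) :=
        setLIntegral_mono' measurableSet_Ioc key2
end

section
/- Let H be a complex inner product space, let p and q be positive integers, and let c̄₁, …, c̄_p and c₁, …, c_q be linear endomorphisms of H such that: ⟨c̄_λ x, y⟩ = −⟨x, c̄_λ y⟩ and ⟨c_μ x, y⟩ = −⟨x, c_μ y⟩ for all x, y ∈ H (skew-adjointness); c̄_λ c̄_{λ′} + c̄_{λ′} c̄_λ = −2δ_{λλ′}·id and c_μ c_{μ′} + c_{μ′} c_μ = −2δ_{μμ′}·id (Clifford relations); and c̄_λ c_μ = c_μ c̄_λ for all λ, μ. Let A be a symmetric positive semidefinite real q × q matrix and let F be a real q × p matrix, with ‖F‖ its operator norm as a linear map from Euclidean ℝ^p to Euclidean ℝ^q. Then for every v ∈ H: −(1/2)·Σ_{λ=1}^p Σ_{μ=1}^q (AF)_{μλ} · Re⟨c̄_λ(c_μ v), v⟩ ≥ −(1/2)·‖F‖·(trace A)·‖v‖². -/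
open scoped ComplexInnerProductSpace

section aux
variable {H : Type*} [NormedAddCommGroup H] [InnerProductSpace ℂ H]

lemma auxCl_apply {n : ℕ} (d : Fin n → H →ₗ[ℂ] H) (a : Fin n → ℝ) (x : H) :
    (∑ l, (a l : ℂ) • d l) x = ∑ l, (a l : ℂ) • d l x := by
  simp

lemma auxCl_sq {n : ℕ} (d : Fin n → H →ₗ[ℂ] H)
    (hcl : ∀ l l' x, d l (d l' x) + d l' (d l x) = if l = l' then (-2 : ℂ) • x else 0)
    (a : Fin n → ℝ) (x : H) :
    (∑ l, (a l : ℂ) • d l) ((∑ l, (a l : ℂ) • d l) x)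
      = (-(∑ l, a l ^ 2 : ℝ) : ℂ) • x := by
  have expand : (∑ l, (a l : ℂ) • d l) ((∑ l, (a l : ℂ) • d l) x)
      = ∑ l, ∑ l', ((a l : ℂ) * (a l' : ℂ)) • d l (d l' x) := by
    simp only [LinearMap.sum_apply, LinearMap.smul_apply, map_sum, map_smul,
      Finset.smul_sum, smul_smul]
    rw [Finset.sum_comm]
    exact Finset.sum_congr rfl fun l _ => Finset.sum_congr rfl fun l' _ => by rw [mul_comm]
  set T := ∑ l, ∑ l', ((a l : ℂ) * (a l' : ℂ)) • d l (d l' x) with hT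
  have hT' : T = ∑ l, ∑ l', ((a l : ℂ) * (a l' : ℂ)) • d l' (d l x) := by
    rw [hT, Finset.sum_comm]
    refine Finset.sum_congr rfl fun l _ => Finset.sum_congr rfl fun l' _ => ?_
    rw [mul_comm]
  have h2 : (2 : ℂ) • T = (2 : ℂ) • ((-(∑ l, a l ^ 2 : ℝ) : ℂ) • x) := by
    have : (2 : ℂ) • T
        = ∑ l, ∑ l', ((a l : ℂ) * (a l' : ℂ)) • (d l (d l' x) + d l' (d l x)) := by
      rw [two_smul]; nth_rewrite 2 [hT']
      rw [hT, ← Finset.sum_add_distrib]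
      refine Finset.sum_congr rfl fun l _ => ?_
      rw [← Finset.sum_add_distrib]
      exact Finset.sum_congr rfl fun l' _ => (smul_add _ _ _).symm
    rw [this]
    have : ∀ l : Fin n, ∑ l', ((a l : ℂ) * (a l' : ℂ)) • (d l (d l' x) + d l' (d l x))
        = ((a l : ℂ) * (a l : ℂ)) • ((-2 : ℂ) • x) := by
      intro l
      have : ∀ l', ((a l : ℂ) * (a l' : ℂ)) • (d l (d l' x) + d l' (d l x))
          = if l = l' then ((a l : ℂ) * (a l' : ℂ)) • ((-2 : ℂ) • x) else 0 := by
        intro l'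
        rw [hcl]
        split <;> simp
      rw [Finset.sum_congr rfl fun l' _ => this l']
      simp
    rw [Finset.sum_congr rfl fun l _ => this l]
    rw [← Finset.sum_smul, smul_smul, smul_smul]
    congr 1
    push_cast
    ring
  rw [expand]
  exact smul_right_injective H (two_ne_zero (α := ℂ)) h2

lemma auxCl_skew {n : ℕ} (d : Fin n → H →ₗ[ℂ] H)
    (hskew : ∀ l (x y : H), ⟪d l x, y⟫ = -⟪x, d l y⟫)
    (a : Fin n → ℝ) (x y : H) :
    ⟪(∑ l, (a l : ℂ) • d l) x, y⟫ = -⟪x, (∑ l, (a l : ℂ) • d l) y⟫ := by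
  simp only [auxCl_apply, sum_inner, inner_sum, inner_smul_left, inner_smul_right,
    Complex.conj_ofReal, hskew, mul_neg, ← Finset.sum_neg_distrib]

lemma auxCl_norm {n : ℕ} (d : Fin n → H →ₗ[ℂ] H)
    (hskew : ∀ l (x y : H), ⟪d l x, y⟫ = -⟪x, d l y⟫)
    (hcl : ∀ l l' x, d l (d l' x) + d l' (d l x) = if l = l' then (-2 : ℂ) • x else 0)
    (a : Fin n → ℝ) (x : H) :
    ‖(∑ l, (a l : ℂ) • d l) x‖ ^ 2 = (∑ l, a l ^ 2) * ‖x‖ ^ 2 := by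
  set D := ∑ l, (a l : ℂ) • d l with hD
  have h1 : ⟪D x, D x⟫ = -⟪x, D (D x)⟫ := auxCl_skew d hskew a x (D x)
  rw [auxCl_sq d hcl a x] at h1
  have h2 : ⟪D x, D x⟫ = ((∑ l, a l ^ 2 : ℝ) : ℂ) * ⟪x, x⟫ := by
    rw [h1, inner_smul_right]; push_cast; ring
  have hre : ∀ y : H, (⟪y, y⟫ : ℂ).re = ‖y‖ ^ 2 := fun y => by
    simpa using inner_self_eq_norm_sq (𝕜 := ℂ) y
  have h3 := congrArg Complex.re h2
  rw [hre, Complex.re_ofReal_mul, hre] at h3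
  exact h3

end aux

theorem stmt_12 (H : Type*) [NormedAddCommGroup H] [InnerProductSpace ℂ H]
    (p q : ℕ) (hp : 0 < p) (hq : 0 < q)
    (cbar : Fin p → H →ₗ[ℂ] H) (c : Fin q → H →ₗ[ℂ] H)
    (hskew1 : ∀ (l : Fin p) (x y : H), ⟪cbar l x, y⟫ = -⟪x, cbar l y⟫)
    (hskew2 : ∀ (m : Fin q) (x y : H), ⟪c m x, y⟫ = -⟪x, c m y⟫)
    (hcl1 : ∀ (l l' : Fin p) (x : H),
      cbar l (cbar l' x) + cbar l' (cbar l x) = if l = l' then (-2 : ℂ) • x else 0)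
    (hcl2 : ∀ (m m' : Fin q) (x : H),
      c m (c m' x) + c m' (c m x) = if m = m' then (-2 : ℂ) • x else 0)
    (hcomm : ∀ (l : Fin p) (m : Fin q) (x : H), cbar l (c m x) = c m (cbar l x))
    (A : Matrix (Fin q) (Fin q) ℝ) (hA : A.PosSemidef)
    (F : Matrix (Fin q) (Fin p) ℝ) :
    ∀ v : H,
      -(1 / 2) * ∑ l : Fin p, ∑ m : Fin q, (A * F) m l * (⟪cbar l (c m v), v⟫).re
        ≥ -(1 / 2) * ‖LinearMap.toContinuousLinearMap (Matrix.toEuclideanLin F)‖ *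
            A.trace * ‖v‖ ^ 2 := by
  intro v
  classical
  set N := ‖LinearMap.toContinuousLinearMap (Matrix.toEuclideanLin F)‖ with hN
  have hN0 : 0 ≤ N := norm_nonneg _
  -- operator norm bound
  have hFop : ∀ x : Fin q → ℝ, ∑ l, (∑ m, F m l * x m) ^ 2 ≤ N ^ 2 * ∑ m, x m ^ 2 := by
    intro x
    set u : Fin p → ℝ := fun l => ∑ m, F m l * x m with hu
    set U : EuclideanSpace ℝ (Fin p) := (WithLp.equiv 2 _).symm u with hU
    set X : EuclideanSpace ℝ (Fin q) := (WithLp.equiv 2 _).symm x with hX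
    have hnormU : ‖U‖ ^ 2 = ∑ l, u l ^ 2 := by
      rw [EuclideanSpace.norm_eq, Real.sq_sqrt (by positivity)]
      simp [hU, sq_abs]
    have hnormX : ‖X‖ ^ 2 = ∑ m, x m ^ 2 := by
      rw [EuclideanSpace.norm_eq, Real.sq_sqrt (by positivity)]
      simp [hX, sq_abs]
    have hkey : ∑ l, u l ^ 2 = (inner ℝ X (Matrix.toEuclideanLin F U) : ℝ) := by
      rw [hU, WithLp.equiv_symm_apply, Matrix.toEuclideanLin_apply_piLp_toLp, PiLp.inner_apply]
      simp only [RCLike.inner_apply, conj_trivial, WithLp.equiv_symm_apply, WithLp.ofLp_toLp,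
        Matrix.mulVec, dotProduct, hX]
      simp only [Finset.sum_mul]
      rw [Finset.sum_comm]
      refine Finset.sum_congr rfl fun l _ => ?_
      have hul : u l = ∑ m, F m l * x m := by rw [hu]
      rw [sq]
      nth_rewrite 1 [hul]
      rw [Finset.sum_mul]
      exact Finset.sum_congr rfl fun m _ => by ring
    have hCS : (inner ℝ X (Matrix.toEuclideanLin F U) : ℝ) ≤ ‖X‖ * ‖Matrix.toEuclideanLin F U‖ :=
      real_inner_le_norm _ _
    have hop : ‖Matrix.toEuclideanLin F U‖ ≤ N * ‖U‖ := by
      have h := (LinearMap.toContinuousLinearMap (Matrix.toEuclideanLin F)).le_opNorm U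
      simpa [hN] using h
    have h1 : ∑ l, u l ^ 2 ≤ ‖X‖ * (N * ‖U‖) := by
      refine hkey.le.trans (hCS.trans ?_)
      exact mul_le_mul_of_nonneg_left hop (norm_nonneg _)
    have hU0 : 0 ≤ ‖U‖ := norm_nonneg _
    have hX0 : 0 ≤ ‖X‖ := norm_nonneg _
    have h2 : ‖U‖ ^ 2 ≤ ‖X‖ * (N * ‖U‖) := by rw [hnormU]; exact h1
    nlinarith [sq_nonneg (N * ‖X‖ - ‖U‖), hnormU, hnormX]
  -- square root of A
  open scoped MatrixOrder in set B := CFC.sqrt A with hBdef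
  open scoped MatrixOrder in have hBB : B * B = A := CFC.sqrt_mul_sqrt_self A hA.nonneg
  open scoped MatrixOrder in have hBherm : B.IsHermitian := (Matrix.nonneg_iff_posSemidef.mp (CFC.sqrt_nonneg A)).1
  have hBs : ∀ k m, B k m = B m k := by
    intro k m
    conv_lhs => rw [← hBherm.eq]
    simp [Matrix.conjTranspose_apply]
  set a : Fin q → Fin p → ℝ := fun k l => ∑ m, F m l * B k m with ha
  set b : Fin q → Fin q → ℝ := fun k m => B k m with hb
  have hAF : ∀ (l : Fin p) (m : Fin q), (A * F) m l = ∑ k, a k l * b k m := by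
    intro l m
    rw [← hBB, Matrix.mul_assoc, Matrix.mul_apply]
    refine Finset.sum_congr rfl fun k _ => ?_
    rw [Matrix.mul_apply, ha, hb]
    simp only [Finset.mul_sum, Finset.sum_mul]
    refine Finset.sum_congr rfl fun m' _ => ?_
    rw [hBs m k]
    ring
  -- per-k operators
  have hk : ∀ k : Fin q,
      (⟪(∑ l, (a k l : ℂ) • cbar l) ((∑ m, (b k m : ℂ) • c m) v), v⟫).re
        = ∑ l, ∑ m, a k l * b k m * (⟪cbar l (c m v), v⟫).re := by
    intro k
    rw [auxCl_apply, auxCl_apply]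
    simp only [map_sum, map_smul, sum_inner, inner_smul_left, Complex.conj_ofReal,
      Finset.mul_sum, Complex.re_sum]
    refine Finset.sum_congr rfl fun l _ => Finset.sum_congr rfl fun m _ => ?_
    rw [← mul_assoc, ← Complex.ofReal_mul, Complex.re_ofReal_mul]
  have hS : ∑ l, ∑ m, (A * F) m l * (⟪cbar l (c m v), v⟫).re
      = ∑ k, (⟪(∑ l, (a k l : ℂ) • cbar l) ((∑ m, (b k m : ℂ) • c m) v), v⟫).re := by
    calc ∑ l, ∑ m, (A * F) m l * (⟪cbar l (c m v), v⟫).re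
        = ∑ l, ∑ m, ∑ k, a k l * b k m * (⟪cbar l (c m v), v⟫).re := by
          refine Finset.sum_congr rfl fun l _ => Finset.sum_congr rfl fun m _ => ?_
          rw [hAF, Finset.sum_mul]
      _ = ∑ l, ∑ k, ∑ m, a k l * b k m * (⟪cbar l (c m v), v⟫).re :=
          Finset.sum_congr rfl fun l _ => Finset.sum_comm
      _ = ∑ k, ∑ l, ∑ m, a k l * b k m * (⟪cbar l (c m v), v⟫).re := Finset.sum_comm
      _ = ∑ k, (⟪(∑ l, (a k l : ℂ) • cbar l) ((∑ m, (b k m : ℂ) • c m) v), v⟫).re := by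
          refine Finset.sum_congr rfl fun k _ => (hk k).symm
  have hdiag : ∀ k, ∑ m, b k m ^ 2 = A k k := by
    intro k
    rw [← hBB, Matrix.mul_apply]
    refine Finset.sum_congr rfl fun m _ => ?_
    rw [hb, hBs m k, sq]
  have hbound : ∀ k : Fin q,
      (⟪(∑ l, (a k l : ℂ) • cbar l) ((∑ m, (b k m : ℂ) • c m) v), v⟫).re
        ≤ N * A k k * ‖v‖ ^ 2 := by
    intro k
    set P := (∑ l, (a k l : ℂ) • cbar l) ((∑ m, (b k m : ℂ) • c m) v) with hP
    have hnormP : ‖P‖ ^ 2 = (∑ l, a k l ^ 2) * ((∑ m, b k m ^ 2) * ‖v‖ ^ 2) := by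
      rw [hP, auxCl_norm cbar hskew1 hcl1, auxCl_norm c hskew2 hcl2]
    have hre : (⟪P, v⟫).re ≤ ‖P‖ * ‖v‖ := by
      calc (⟪P, v⟫).re ≤ ‖(⟪P, v⟫ : ℂ)‖ := Complex.re_le_norm _
        _ ≤ ‖P‖ * ‖v‖ := norm_inner_le_norm _ _
    have hak : ∑ l, a k l ^ 2 ≤ N ^ 2 * ∑ m, b k m ^ 2 := hFop fun m => B k m
    have hA2 : (0 : ℝ) ≤ ∑ m, b k m ^ 2 := by positivity
    have hPle : ‖P‖ ≤ N * A k k * ‖v‖ := by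
      have hsq : ‖P‖ ^ 2 ≤ (N * A k k * ‖v‖) ^ 2 := by
        rw [hnormP, ← hdiag k]
        nlinarith [mul_le_mul_of_nonneg_right hak (mul_nonneg hA2 (sq_nonneg ‖v‖))]
      have h1 : 0 ≤ N * A k k * ‖v‖ := by
        have : (0:ℝ) ≤ A k k := (hdiag k) ▸ hA2
        positivity
      nlinarith [norm_nonneg P]
    calc (⟪P, v⟫).re ≤ ‖P‖ * ‖v‖ := hre
      _ ≤ N * A k k * ‖v‖ * ‖v‖ := mul_le_mul_of_nonneg_right hPle (norm_nonneg v)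
      _ = N * A k k * ‖v‖ ^ 2 := by ring
  have hSle : ∑ l, ∑ m, (A * F) m l * (⟪cbar l (c m v), v⟫).re ≤ N * A.trace * ‖v‖ ^ 2 := by
    rw [hS]
    calc ∑ k, (⟪(∑ l, (a k l : ℂ) • cbar l) ((∑ m, (b k m : ℂ) • c m) v), v⟫).re
        ≤ ∑ k, N * A k k * ‖v‖ ^ 2 := Finset.sum_le_sum fun k _ => hbound k
      _ = N * A.trace * ‖v‖ ^ 2 := by
          rw [Matrix.trace]
          simp only [Matrix.diag, Finset.mul_sum, Finset.sum_mul]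
  linarith
end

section
/- Let n ≥ 1 be an integer, let μ₁, …, μ_n be nonnegative real numbers, and let c > 0 be a real number. Let R_{ij} (for 1 ≤ i, j ≤ n, i ≠ j) be real numbers with R_{ij} = R_{ji} ≥ 0 for all i ≠ j. Assume: (a) for every index i there exists an index j ≠ i with R_{ij} > 0; (b) for every index k there exist indices i ≠ k and j ≠ k with i ≠ j and R_{ij} > 0; (c) μ_i·μ_j ≤ c for all i ≠ j; and (d) Σ_{i ≠ j} (c² − μ_i²·μ_j²)·R_{ij} = 0. Then μ_i = √c for every i. -/
theorem stmt_14 (n : ℕ) (hn : 1 ≤ n) (μ : Fin n → ℝ) (hμ : ∀ i, 0 ≤ μ i)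
    (c : ℝ) (hc : 0 < c)
    (R : Fin n → Fin n → ℝ)
    (hsymm : ∀ i j, R i j = R j i)
    (hR : ∀ i j, i ≠ j → 0 ≤ R i j)
    (ha : ∀ i, ∃ j, j ≠ i ∧ 0 < R i j)
    (hb : ∀ k, ∃ i j, i ≠ k ∧ j ≠ k ∧ i ≠ j ∧ 0 < R i j)
    (hbound : ∀ i j, i ≠ j → μ i * μ j ≤ c)
    (hd : ∑ i : Fin n, ∑ j : Fin n,
        (if i ≠ j then (c ^ 2 - μ i ^ 2 * μ j ^ 2) * R i j else 0) = 0) :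
    ∀ i, μ i = Real.sqrt c := by
  have hterm : ∀ i j : Fin n,
      0 ≤ (if i ≠ j then (c ^ 2 - μ i ^ 2 * μ j ^ 2) * R i j else 0) := by
    intro i j
    split
    · next h =>
      apply mul_nonneg _ (hR i j h)
      nlinarith [hbound i j h, mul_nonneg (hμ i) (hμ j)]
    · exact le_refl _
  have hzero : ∀ i j : Fin n, i ≠ j → 0 < R i j → μ i * μ j = c := by
    intro i j hij hRij
    have h1 := (Finset.sum_eq_zero_iff_of_nonneg
      (fun i _ => Finset.sum_nonneg (fun j _ => hterm i j))).mp hd i (Finset.mem_univ i)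
    have h2 := (Finset.sum_eq_zero_iff_of_nonneg (fun j _ => hterm i j)).mp h1 j
      (Finset.mem_univ j)
    rw [if_pos hij] at h2
    have h3 : c ^ 2 - μ i ^ 2 * μ j ^ 2 = 0 := by
      rcases mul_eq_zero.mp h2 with h | h
      · exact h
      · exact absurd h (ne_of_gt hRij)
    nlinarith [mul_nonneg (hμ i) (hμ j), hbound i j hij]
  have hne : Nonempty (Fin n) := ⟨⟨0, hn⟩⟩
  obtain ⟨k, hk⟩ := Finite.exists_max μ
  obtain ⟨k', hk'⟩ := Finite.exists_min μ
  -- upper bound: μ k ≤ √c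
  obtain ⟨i, j, hik, hjk, hij, hRij⟩ := hb k
  have hμij : μ i * μ j = c := hzero i j hij hRij
  have hi0 : 0 < μ i := by
    by_contra h
    push_neg at h
    nlinarith [hμ j]
  have hkj : μ k ≤ μ j := by
    have h1 : μ i * μ k ≤ c := hbound i k hik
    have := hμij ▸ h1
    exact le_of_mul_le_mul_left this hi0
  have hjk' : μ j = μ k := le_antisymm (hk j) hkj
  have hksq : μ k ^ 2 ≤ c := by
    have := hbound j k hjk
    rw [hjk'] at this
    nlinarith
  have hkle : μ k ≤ Real.sqrt c := by
    have := Real.sqrt_le_sqrt hksq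
    rwa [Real.sqrt_sq (hμ k)] at this
  -- lower bound: √c ≤ μ k'
  obtain ⟨l, hlk, hRl⟩ := ha k'
  have hμkl : μ k' * μ l = c := hzero k' l hlk.symm hRl
  have hs : 0 < Real.sqrt c := Real.sqrt_pos.mpr hc
  have hkge : Real.sqrt c ≤ μ k' := by
    have h1 : μ l ≤ Real.sqrt c := le_trans (hk l) hkle
    nlinarith [Real.sq_sqrt hc.le, hμ k']
  intro m
  exact le_antisymm (le_trans (hk m) hkle) (le_trans hkge (hk' m))
end
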